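/- Suppose for each (x,y) the set S(x,y) = {((σσ^*)(x,v), (σσ^*)(x,v)w, b(x,v), f(x,y,σ^*(x,v)w,v)) : v ∈ U, w ∈ ℝ^d, |σ^*(x,v)w| ≤ K} is convex (assumption (H1)). Then assumption (H) holds: for every (x,y) there exists a compact set A ⊆ ℝ^d × ℝ^d × U containing {(σ^*(x,v)w, 0, v) : v ∈ U, w ∈ ℝ^d, |σ^*(x,v)w| ≤ K} such that the set {((ΣΣ^*)(x,y,z,θ,v), β(x,y,z,θ,v)) : (z,θ,v) ∈ A} is convex. -/

import Mathlib

/-!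
Write `a = σσ*`, `u = σz` and `s = |z|² + |θ|²`, so that `ΣΣ* = [[a, u], [uᵀ, s]]`. When
`u = a w` and `z = σ*w`, `|z|²` is the supremum over `c` of the affine function
`2⟨c, u⟩ - ⟨c, a c⟩` of `(a, u)`. Hence the set of `([[a, u], [uᵀ, s]], (b, -f))` with
`(a, u, b, f) ∈ S(x, y)` and `sup_c (2⟨c, u⟩ - ⟨c, a c⟩) ≤ s ≤ K²` is convex by (H1). Choosing `θ`
with `|θ|² = s - |z|²` exhibits it as the image of points of the compact box `|z|, |θ| ≤ K`; its
closure is then still such an image, and `A` is the preimage of that closure in the box.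
-/

open Matrix

/-- Euclidean norm of a vector in `Fin d → ℝ`. -/
noncomputable def enorm' {d : ℕ} (z : Fin d → ℝ) : ℝ := Real.sqrt (∑ i, z i ^ 2)

/-- The matrix `Σ(x,y,z,θ,v) = [[σ(x,v), 0],[z^*, θ^*]]`. -/
def SigmaMat {d : ℕ} (σxv : Matrix (Fin d) (Fin d) ℝ) (z θ : Fin d → ℝ) :
    Matrix (Fin d ⊕ Unit) (Fin d ⊕ Fin d) ℝ :=
  Matrix.fromBlocks σxv (0 : Matrix (Fin d) (Fin d) ℝ) (Matrix.replicateRow Unit z) (Matrix.replicateRow Unit θ)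

theorem exists_isCompact_convex_image {X Y : Type*} [TopologicalSpace X] [TopologicalSpace Y]
    [AddCommGroup Y] [Module ℝ Y] [T2Space Y] [IsTopologicalAddGroup Y] [ContinuousSMul ℝ Y]
    {Φ : X → Y} (hΦ : Continuous Φ) {D : Set X} (hD : IsCompact D) {T : Set Y}
    (hT : Convex ℝ T) (hTD : T ⊆ Φ '' D) :
    ∃ A, IsCompact A ∧ D ∩ Φ ⁻¹' T ⊆ A ∧ Convex ℝ (Φ '' A) := by
  refine ⟨D ∩ Φ ⁻¹' closure T, hD.inter_right (isClosed_closure.preimage hΦ),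
    Set.inter_subset_inter_right D (Set.preimage_mono subset_closure), ?_⟩
  have hclosure : closure T ⊆ Φ '' D := closure_minimal hTD (hD.image hΦ).isClosed
  rw [Set.image_inter_preimage, Set.inter_eq_right.mpr hclosure]
  exact hT.closure

section SchurBound

variable {m n : Type*} [Fintype m] [Fintype n]

theorem two_mul_dotProduct_sub_le (p q : n → ℝ) : 2 * (p ⬝ᵥ q) - p ⬝ᵥ p ≤ q ⬝ᵥ q := by
  have h := dotProduct_self_star_nonneg (q - p)
  simp only [star_trivial, dotProduct_sub, sub_dotProduct, dotProduct_comm q p] at h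
  linarith

theorem dotProduct_mul_transpose_mulVec {R : Type*} [CommSemiring R] (A : Matrix n m R)
    (c w : n → R) : c ⬝ᵥ ((A * Aᵀ) *ᵥ w) = (Aᵀ *ᵥ c) ⬝ᵥ (Aᵀ *ᵥ w) := by
  rw [← mulVec_mulVec, dotProduct_mulVec, mulVec_transpose, mulVec_transpose]

theorem norm_le_of_dotProduct_self_le {r : ℝ} (hr : 0 ≤ r) {z : n → ℝ} (h : z ⬝ᵥ z ≤ r ^ 2) :
    ‖z‖ ≤ r := by
  refine (pi_norm_le_iff_of_nonneg hr).mpr fun i => ?_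
  have hi : z i * z i ≤ z ⬝ᵥ z := Finset.single_le_sum (f := fun j => z j * z j)
    (fun j _ => mul_self_nonneg _) (Finset.mem_univ i)
  rw [Real.norm_eq_abs]
  exact abs_le_of_sq_le_sq (by nlinarith) hr

theorem exists_dotProduct_self_eq [Nonempty n] {t : ℝ} (ht : 0 ≤ t) :
    ∃ θ : n → ℝ, θ ⬝ᵥ θ = t := by
  classical
  obtain ⟨i⟩ := ‹Nonempty n›
  exact ⟨Pi.single i √t, by simp [Real.mul_self_sqrt ht]⟩

/-- Equivalently, `[[a, u], [uᵀ, s]]` is positive semidefinite; this form is linear in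
`(a, u, s)`. -/
def IsSchurBound (a : Matrix n n ℝ) (u : n → ℝ) (s : ℝ) : Prop :=
  ∀ c, 2 * (c ⬝ᵥ u) - c ⬝ᵥ (a *ᵥ c) ≤ s

theorem convex_setOf_isSchurBound {E : Type*} [AddCommGroup E] [Module ℝ E] :
    Convex ℝ {p : (Matrix n n ℝ × (n → ℝ) × E) × ℝ | IsSchurBound p.1.1 p.1.2.1 p.2} := by
  rintro ⟨⟨a₁, u₁, e₁⟩, s₁⟩ h₁ ⟨⟨a₂, u₂, e₂⟩, s₂⟩ h₂ μ ν hμ hν hμν c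
  have h₁c := mul_le_mul_of_nonneg_left (h₁ c) hμ
  have h₂c := mul_le_mul_of_nonneg_left (h₂ c) hν
  simp only [Prod.smul_mk, Prod.mk_add_mk, smul_eq_mul, add_mulVec, smul_mulVec, dotProduct_add,
    dotProduct_smul]
  linarith

theorem isSchurBound_mul_transpose_iff (A : Matrix n m ℝ) (w : n → ℝ) (s : ℝ) :
    IsSchurBound (A * Aᵀ) ((A * Aᵀ) *ᵥ w) s ↔ (Aᵀ *ᵥ w) ⬝ᵥ (Aᵀ *ᵥ w) ≤ s := by
  simp only [IsSchurBound, dotProduct_mul_transpose_mulVec]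
  exact ⟨fun h => by linarith [h w], fun h c => (two_mul_dotProduct_sub_le _ _).trans h⟩

/-- `((a, u, c, φ), s) ↦ ([[a, u], [uᵀ, s]], (c, -φ))`: this is `(ΣΣ*, β)` when `a = σσ*`,
`u = σz`, `c = b`, `φ = f` and `s = |z|² + |θ|²`. -/
def blockCoeff :
    (Matrix n n ℝ × (n → ℝ) × (n → ℝ) × ℝ) × ℝ →ₗ[ℝ]
      Matrix (n ⊕ Unit) (n ⊕ Unit) ℝ × (n → ℝ) × ℝ where
  toFun p :=
    (fromBlocks p.1.1 (replicateCol Unit p.1.2.1) (replicateRow Unit p.1.2.1) (of fun _ _ => p.2),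
      (p.1.2.2.1, -p.1.2.2.2))
  map_add' p q := by
    refine Prod.ext ?_ (Prod.ext rfl (neg_add _ _))
    ext (i | i) (j | j) <;> simp
  map_smul' c p := by
    refine Prod.ext ?_ (Prod.ext rfl (smul_neg _ _).symm)
    ext (i | i) (j | j) <;> simp

end SchurBound

section Euclidean

variable {d : ℕ}

@[simp]
theorem enorm'_zero : enorm' (0 : Fin d → ℝ) = 0 := by
  simp [enorm']

theorem enorm'_le_iff {r : ℝ} (hr : 0 ≤ r) (z : Fin d → ℝ) : enorm' z ≤ r ↔ z ⬝ᵥ z ≤ r ^ 2 := by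
  simp [enorm', Real.sqrt_le_iff, hr, dotProduct, sq]

theorem enorm'_le_sqrt_mul_norm (z : Fin d → ℝ) : enorm' z ≤ √d * ‖z‖ := by
  rw [enorm', ← Real.sqrt_sq (norm_nonneg z), ← Real.sqrt_mul (Nat.cast_nonneg d)]
  refine Real.sqrt_le_sqrt ?_
  calc ∑ i, z i ^ 2 ≤ ∑ _i : Fin d, ‖z‖ ^ 2 := Finset.sum_le_sum fun i _ => by
        simpa only [Real.norm_eq_abs, sq_abs] using
          pow_le_pow_left₀ (norm_nonneg _) (norm_le_pi_norm z i) 2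
    _ = d * ‖z‖ ^ 2 := by simp

theorem continuous_uncurry_of_enorm'_lipschitz {X : Type*} [TopologicalSpace X]
    {g : (Fin d → ℝ) → X → ℝ} {L : ℝ} (hlip : ∀ z z' v, |g z v - g z' v| ≤ L * enorm' (z - z'))
    (hc : ∀ z, Continuous (g z)) : Continuous fun p : (Fin d → ℝ) × X => g p.1 p.2 := by
  refine continuous_prod_of_continuous_lipschitzWith _ (|L| * √d).toNNReal hc fun v =>
    LipschitzWith.of_dist_le' fun z z' => ?_
  calc dist (g z v) (g z' v) ≤ L * enorm' (z - z') := hlip z z' v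
    _ ≤ |L| * (√d * ‖z - z'‖) :=
      mul_le_mul (le_abs_self L) (enorm'_le_sqrt_mul_norm _) (Real.sqrt_nonneg _) (abs_nonneg L)
    _ = |L| * √d * dist z z' := by rw [dist_eq_norm, mul_assoc]

end Euclidean

theorem SigmaMat_mul_transpose {d : ℕ} (σm : Matrix (Fin d) (Fin d) ℝ) (z θ : Fin d → ℝ) :
    SigmaMat σm z θ * (SigmaMat σm z θ)ᵀ =
      fromBlocks (σm * σmᵀ) (replicateCol Unit (σm *ᵥ z)) (replicateRow Unit (σm *ᵥ z))
        (of fun _ _ => z ⬝ᵥ z + θ ⬝ᵥ θ) := by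
  rw [SigmaMat, fromBlocks_transpose, fromBlocks_multiply]
  congr 1 <;> ext <;> simp [mul_apply, mulVec, dotProduct, mul_comm]

section Coefficients

variable {d : ℕ} {U : Type*} (σ' : U → Matrix (Fin d) (Fin d) ℝ) (b' : U → Fin d → ℝ)
  (g : (Fin d → ℝ) → U → ℝ) (K : ℝ)

/-- The set `S(x, y)` of (H1), for `σ' = σ x`, `b' = b x`, `g = f x y`. -/
def coeffSet : Set (Matrix (Fin d) (Fin d) ℝ × (Fin d → ℝ) × (Fin d → ℝ) × ℝ) :=
  {q | ∃ (v : U) (w : Fin d → ℝ), enorm' ((σ' v)ᵀ *ᵥ w) ≤ K ∧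
    q = (σ' v * (σ' v)ᵀ, (σ' v * (σ' v)ᵀ) *ᵥ w, b' v, g ((σ' v)ᵀ *ᵥ w) v)}

/-- `(z, θ, v) ↦ ((ΣΣ*)(x, y, z, θ, v), β(x, y, z, θ, v))`. -/
def sigmaBeta (p : (Fin d → ℝ) × (Fin d → ℝ) × U) :
    Matrix (Fin d ⊕ Unit) (Fin d ⊕ Unit) ℝ × (Fin d → ℝ) × ℝ :=
  (SigmaMat (σ' p.2.2) p.1 p.2.1 * (SigmaMat (σ' p.2.2) p.1 p.2.1)ᵀ, (b' p.2.2, -g p.1 p.2.2))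

def schurLift : Set ((Matrix (Fin d) (Fin d) ℝ × (Fin d → ℝ) × (Fin d → ℝ) × ℝ) × ℝ) :=
  (coeffSet σ' b' g K ×ˢ Set.Iic (K ^ 2)) ∩ {p | IsSchurBound p.1.1 p.1.2.1 p.2}

variable {σ' b' g K}

theorem continuous_sigmaBeta [TopologicalSpace U] (hσ : Continuous σ') (hb : Continuous b')
    (hg : Continuous fun p : (Fin d → ℝ) × U => g p.1 p.2) : Continuous (sigmaBeta σ' b' g) := by
  have : Continuous fun p : (Fin d → ℝ) × (Fin d → ℝ) × U => g p.1 p.2.2 :=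
    hg.comp (continuous_fst.prodMk (continuous_snd.comp continuous_snd))
  unfold sigmaBeta SigmaMat
  fun_prop

theorem sigmaBeta_transpose_mulVec (v : U) (w θ : Fin d → ℝ) :
    sigmaBeta σ' b' g ((σ' v)ᵀ *ᵥ w, θ, v) = blockCoeff
      ((σ' v * (σ' v)ᵀ, (σ' v * (σ' v)ᵀ) *ᵥ w, b' v, g ((σ' v)ᵀ *ᵥ w) v),
        ((σ' v)ᵀ *ᵥ w) ⬝ᵥ ((σ' v)ᵀ *ᵥ w) + θ ⬝ᵥ θ) := by
  simp only [sigmaBeta, SigmaMat_mul_transpose, mulVec_mulVec]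
  rfl

theorem convex_image_schurLift (h : Convex ℝ (coeffSet σ' b' g K)) :
    Convex ℝ (blockCoeff '' schurLift σ' b' g K) :=
  ((h.prod (convex_Iic _)).inter convex_setOf_isSchurBound).linear_image _

theorem image_schurLift_subset [Nonempty (Fin d)] (hK : 0 ≤ K) :
    blockCoeff '' schurLift σ' b' g K ⊆
      sigmaBeta σ' b' g '' (Metric.closedBall 0 K ×ˢ Metric.closedBall 0 K ×ˢ Set.univ) := by
  rintro _ ⟨⟨_, s⟩, ⟨⟨⟨v, w, -, rfl⟩, hsK : s ≤ K ^ 2⟩, hs⟩, rfl⟩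
  replace hs : _ ≤ s := (isSchurBound_mul_transpose_iff _ _ _).mp hs
  set z := (σ' v)ᵀ *ᵥ w
  obtain ⟨θ, hθ⟩ : ∃ θ : Fin d → ℝ, θ ⬝ᵥ θ = s - z ⬝ᵥ z :=
    exists_dotProduct_self_eq (sub_nonneg.mpr hs)
  have hz : 0 ≤ z ⬝ᵥ z := by simpa using dotProduct_self_star_nonneg z
  refine ⟨(z, θ, v), ⟨?_, ?_, trivial⟩, by rw [sigmaBeta_transpose_mulVec, hθ, add_sub_cancel]⟩
  · exact mem_closedBall_zero_iff.mpr (norm_le_of_dotProduct_self_le hK (by linarith))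
  · exact mem_closedBall_zero_iff.mpr (norm_le_of_dotProduct_self_le hK (by linarith))

theorem mem_preimage_image_schurLift (hK : 0 ≤ K) {v : U} {w : Fin d → ℝ}
    (hw : enorm' ((σ' v)ᵀ *ᵥ w) ≤ K) :
    ((σ' v)ᵀ *ᵥ w, 0, v) ∈ (Metric.closedBall 0 K ×ˢ Metric.closedBall 0 K ×ˢ Set.univ) ∩
      sigmaBeta σ' b' g ⁻¹' (blockCoeff '' schurLift σ' b' g K) := by
  have hzK := (enorm'_le_iff hK _).mp hw
  refine ⟨⟨mem_closedBall_zero_iff.mpr (norm_le_of_dotProduct_self_le hK hzK), by simp [hK],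
    trivial⟩, ?_⟩
  rw [Set.mem_preimage, sigmaBeta_transpose_mulVec, dotProduct_zero, add_zero]
  exact Set.mem_image_of_mem _
    ⟨⟨⟨v, w, hw, rfl⟩, hzK⟩, (isSchurBound_mul_transpose_iff _ _ _).mpr le_rfl⟩

end Coefficients

theorem stmt12_general {d : ℕ} (hd : 1 ≤ d) {U : Type*} [MetricSpace U] [CompactSpace U]
    (σ : (Fin d → ℝ) → U → Matrix (Fin d) (Fin d) ℝ)
    (b : (Fin d → ℝ) → U → Fin d → ℝ)
    (f : (Fin d → ℝ) → ℝ → (Fin d → ℝ) → U → ℝ)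
    (L K : ℝ) (hK : 0 < K)
    (hflip : ∀ x x' y y' z z' v,
      |f x y z v - f x' y' z' v| ≤ L * (enorm' (x - x') + |y - y'| + enorm' (z - z')))
    (hσc : ∀ x, Continuous fun v => σ x v)
    (hbc : ∀ x, Continuous fun v => b x v)
    (hfc : ∀ x y z, Continuous fun v => f x y z v)
    (H1 : ∀ (x : Fin d → ℝ) (y : ℝ),
      Convex ℝ {q : Matrix (Fin d) (Fin d) ℝ × (Fin d → ℝ) × (Fin d → ℝ) × ℝ |
        ∃ (v : U) (w : Fin d → ℝ), enorm' ((σ x v)ᵀ *ᵥ w) ≤ K ∧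
          q = (σ x v * (σ x v)ᵀ, (σ x v * (σ x v)ᵀ) *ᵥ w, b x v, f x y ((σ x v)ᵀ *ᵥ w) v)}) :
    ∀ (x : Fin d → ℝ) (y : ℝ),
      ∃ A : Set ((Fin d → ℝ) × (Fin d → ℝ) × U), IsCompact A ∧
        {p : (Fin d → ℝ) × (Fin d → ℝ) × U | ∃ (v : U) (w : Fin d → ℝ),
            enorm' ((σ x v)ᵀ *ᵥ w) ≤ K ∧ p = ((σ x v)ᵀ *ᵥ w, 0, v)} ⊆ A ∧
        Convex ℝ {q : Matrix (Fin d ⊕ Unit) (Fin d ⊕ Unit) ℝ × ((Fin d → ℝ) × ℝ) |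
          ∃ p ∈ A, q = (SigmaMat (σ x p.2.2) p.1 p.2.1 * (SigmaMat (σ x p.2.2) p.1 p.2.1)ᵀ,
            (b x p.2.2, -f x y p.1 p.2.2))} := by
  intro x y
  have : Nonempty (Fin d) := ⟨⟨0, hd⟩⟩
  have hf : Continuous fun p : (Fin d → ℝ) × U => f x y p.1 p.2 :=
    continuous_uncurry_of_enorm'_lipschitz (fun z z' v => by simpa using hflip x x y y z z' v)
      (hfc x y)
  obtain ⟨A, hA, hDA, hAconv⟩ := exists_isCompact_convex_image
    (continuous_sigmaBeta (hσc x) (hbc x) hf)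
    ((isCompact_closedBall _ _).prod ((isCompact_closedBall _ _).prod isCompact_univ))
    (convex_image_schurLift (H1 x y)) (image_schurLift_subset hK.le)
  refine ⟨A, hA, ?_, by simpa only [Set.image, eq_comm, sigmaBeta] using hAconv⟩
  rintro _ ⟨v, w, hw, rfl⟩
  exact hDA (mem_preimage_image_schurLift hK.le hw)

theorem stmt12 {d : ℕ} (hd : 1 ≤ d) {U : Type*} [MetricSpace U] [CompactSpace U]
    (σ : (Fin d → ℝ) → U → Matrix (Fin d) (Fin d) ℝ)
    (b : (Fin d → ℝ) → U → Fin d → ℝ)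
    (f : (Fin d → ℝ) → ℝ → (Fin d → ℝ) → U → ℝ)
    (M L K : ℝ) (hK : 0 < K)
    (hσM : ∀ x v i j, |σ x v i j| ≤ M)
    (hbM : ∀ x v i, |b x v i| ≤ M)
    (hfM : ∀ x y z v, |f x y z v| ≤ M)
    (hσlip : ∀ x x' v, (∀ i j, |σ x v i j - σ x' v i j| ≤ L * enorm' (x - x')))
    (hblip : ∀ x x' v, enorm' (b x v - b x' v) ≤ L * enorm' (x - x'))
    (hflip : ∀ x x' y y' z z' v,
      |f x y z v - f x' y' z' v| ≤ L * (enorm' (x - x') + |y - y'| + enorm' (z - z')))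
    (hσc : ∀ x, Continuous fun v => σ x v)
    (hbc : ∀ x, Continuous fun v => b x v)
    (hfc : ∀ x y z, Continuous fun v => f x y z v)
    (H1 : ∀ (x : Fin d → ℝ) (y : ℝ),
      Convex ℝ {q : Matrix (Fin d) (Fin d) ℝ × (Fin d → ℝ) × (Fin d → ℝ) × ℝ |
        ∃ (v : U) (w : Fin d → ℝ), enorm' ((σ x v)ᵀ *ᵥ w) ≤ K ∧
          q = (σ x v * (σ x v)ᵀ, (σ x v * (σ x v)ᵀ) *ᵥ w, b x v, f x y ((σ x v)ᵀ *ᵥ w) v)}) :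
    ∀ (x : Fin d → ℝ) (y : ℝ),
      ∃ A : Set ((Fin d → ℝ) × (Fin d → ℝ) × U), IsCompact A ∧
        {p : (Fin d → ℝ) × (Fin d → ℝ) × U | ∃ (v : U) (w : Fin d → ℝ),
            enorm' ((σ x v)ᵀ *ᵥ w) ≤ K ∧ p = ((σ x v)ᵀ *ᵥ w, 0, v)} ⊆ A ∧
        Convex ℝ {q : Matrix (Fin d ⊕ Unit) (Fin d ⊕ Unit) ℝ × ((Fin d → ℝ) × ℝ) |
          ∃ p ∈ A, q = (SigmaMat (σ x p.2.2) p.1 p.2.1 * (SigmaMat (σ x p.2.2) p.1 p.2.1)ᵀ,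
            (b x p.2.2, -f x y p.1 p.2.2))} :=
  stmt12_general hd σ b f L K hK hflip hσc hbc hfc H1
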